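/- arXiv:1608.08871 — 3 statements merged into one kernel-verified Lean document; each statement's English description precedes it below -/
import Mathlib

section
/- Let d ≥ 1, Ω ⊆ E = EuclideanSpace ℝ (Fin d), h > 0, J a finite index set, nodes x_j ∈ E, and φ_j : E → ℝ with 0 ≤ φ_j(x) ≤ 1, Σ_{j∈J} φ_j(x) = 1 for every x ∈ Ω, and φ_j(x) = 0 whenever ‖x − x_j‖ > h. For each j ∈ J let a_j ∈ ℝ with |a_j| ≤ M₀, β_j ∈ ℝ, η_j ∈ ℝ with 0 < η_j ≤ η_max, and unit vectors d_j, d_j^h ∈ E with ‖d_j − d_j^h‖ ≤ ε. Define v(x) := Σ_{j∈J} a_j φ_j(x)·exp(i(β_j + ω η_j ⟨d_j, x − x_j⟩)) and v^h(x) := Σ_{j∈J} a_j φ_j(x)·exp(i(β_j + ω η_j ⟨d_j^h, x − x_j⟩)). Then for every ω > 0 and every x ∈ Ω, |v(x) − v^h(x)| ≤ ω h η_max ε M₀. -/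
/-!
Each summand of `v - vʰ` is `aⱼ φⱼ(x)` times a difference of two unimodular factors whose
phases differ by `ω ηⱼ ⟨dⱼ - dⱼʰ, x - xⱼ⟩`. Since `t ↦ exp (i t)` is `1`-Lipschitz and
`φⱼ(x) ≠ 0` forces `‖x - xⱼ‖ ≤ h`, every such difference is at most `ω ηmax ε h` wherever its
weight is nonzero, and a convex combination of vectors of norm at most `C` has norm at most `C`.
-/

open Complex
open scoped InnerProductSpace BigOperators

theorem Complex.norm_exp_I_mul_ofReal_sub_exp_I_mul_ofReal_le (s t : ℝ) :
    ‖exp (I * s) - exp (I * t)‖ ≤ |s - t| := by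
  have hfactor : exp (I * s) - exp (I * t) = exp (I * t) * (exp (I * ↑(s - t)) - 1) := by
    rw [mul_sub, ← exp_add, mul_one]
    push_cast
    ring_nf
  rw [hfactor, norm_mul, mul_comm I, norm_exp_ofReal_mul_I, one_mul]
  exact Real.norm_exp_I_mul_ofReal_sub_one_le

theorem norm_sum_smul_le_of_sum_eq_one {ι E : Type*} [SeminormedAddCommGroup E]
    [NormedSpace ℝ E] {J : Finset ι} {w : ι → ℝ} {f : ι → E} {C : ℝ}
    (hw : ∀ j ∈ J, 0 ≤ w j) (hw1 : ∑ j ∈ J, w j = 1)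
    (hf : ∀ j ∈ J, w j ≠ 0 → ‖f j‖ ≤ C) :
    ‖∑ j ∈ J, w j • f j‖ ≤ C :=
  calc ‖∑ j ∈ J, w j • f j‖ ≤ ∑ j ∈ J, ‖w j • f j‖ := norm_sum_le _ _
    _ ≤ ∑ j ∈ J, w j * C := by
      refine Finset.sum_le_sum fun j hj => ?_
      rw [norm_smul, Real.norm_of_nonneg (hw j hj)]
      rcases eq_or_ne (w j) 0 with hzero | hne
      · simp [hzero]
      · exact mul_le_mul_of_nonneg_left (hf j hj hne) (hw j hj)
    _ = C := by rw [← Finset.sum_mul, hw1, one_mul]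

theorem norm_exp_plane_wave_sub_le {E : Type*} [NormedAddCommGroup E] [InnerProductSpace ℝ E]
    (β k : ℝ) (e e' y : E) :
    ‖exp (I * ↑(β + k * ⟪e, y⟫_ℝ)) - exp (I * ↑(β + k * ⟪e', y⟫_ℝ))‖
      ≤ |k| * (‖e - e'‖ * ‖y‖) := by
  refine (norm_exp_I_mul_ofReal_sub_exp_I_mul_ofReal_le _ _).trans ?_
  have hphase : β + k * ⟪e, y⟫_ℝ - (β + k * ⟪e', y⟫_ℝ) = k * ⟪e - e', y⟫_ℝ := by
    rw [inner_sub_left]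
    ring
  rw [hphase, abs_mul]
  exact mul_le_mul_of_nonneg_left (abs_real_inner_le_norm _ _) (abs_nonneg k)

theorem stmt_7_general {d : ℕ} {ι : Type*} (J : Finset ι)
    (Ω : Set (EuclideanSpace ℝ (Fin d))) (h : ℝ)
    (xj : ι → EuclideanSpace ℝ (Fin d))
    (φj : ι → EuclideanSpace ℝ (Fin d) → ℝ)
    (hφj : ∀ j ∈ J, ∀ x, 0 ≤ φj j x ∧ φj j x ≤ 1)
    (hsum : ∀ x ∈ Ω, ∑ j ∈ J, φj j x = 1)
    (hsupp : ∀ j ∈ J, ∀ x, h < ‖x - xj j‖ → φj j x = 0)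
    (a : ι → ℝ) (M₀ : ℝ) (ha : ∀ j ∈ J, |a j| ≤ M₀)
    (β η : ι → ℝ) (ηmax : ℝ)
    (hη : ∀ j ∈ J, 0 < η j ∧ η j ≤ ηmax)
    (dj djh : ι → EuclideanSpace ℝ (Fin d))
    (ε : ℝ) (hε : ∀ j ∈ J, ‖dj j - djh j‖ ≤ ε) :
    ∀ ω : ℝ, 0 < ω → ∀ x ∈ Ω,
      ‖((∑ j ∈ J, (a j : ℂ) * (φj j x : ℂ) *
            Complex.exp (Complex.I * ((β j + ω * η j * ⟪dj j, x - xj j⟫_ℝ : ℝ) : ℂ)))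
         - ∑ j ∈ J, (a j : ℂ) * (φj j x : ℂ) *
            Complex.exp (Complex.I * ((β j + ω * η j * ⟪djh j, x - xj j⟫_ℝ : ℝ) : ℂ)))‖
      ≤ ω * h * ηmax * ε * M₀ := by
  intro ω hω x hx
  have hsmul : ∀ (j : ι) (e e' : ℂ), (a j : ℂ) * (φj j x : ℂ) * e - (a j : ℂ) * (φj j x : ℂ) * e'
      = φj j x • ((a j : ℂ) * (e - e')) := fun j e e' => by
    rw [Complex.real_smul]
    ring
  simp only [← Finset.sum_sub_distrib, hsmul]
  refine norm_sum_smul_le_of_sum_eq_one (fun j hj => (hφj j hj x).1) (hsum x hx)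
    fun j hj hφ => ?_
  have hnear : ‖x - xj j‖ ≤ h := not_lt.mp fun hfar => hφ (hsupp j hj x hfar)
  obtain ⟨hη0, hηle⟩ := hη j hj
  rw [norm_mul, Complex.norm_real, Real.norm_eq_abs]
  calc |a j| * ‖_‖ ≤ M₀ * (|ω * η j| * (‖dj j - djh j‖ * ‖x - xj j‖)) :=
        mul_le_mul (ha j hj) (norm_exp_plane_wave_sub_le _ _ _ _ _) (norm_nonneg _)
          ((abs_nonneg _).trans (ha j hj))
    _ ≤ M₀ * (ω * ηmax * (ε * h)) := by
        rw [abs_of_pos (mul_pos hω hη0)]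
        have hM₀ : 0 ≤ M₀ := (abs_nonneg _).trans (ha j hj)
        have hηmax : 0 ≤ ηmax := hη0.le.trans hηle
        have hε0 : 0 ≤ ε := (norm_nonneg _).trans (hε j hj)
        gcongr
        exact hε j hj
    _ = ω * h * ηmax * ε * M₀ := by ring

/-- Sensitivity of the ray-FEM interpolant to perturbations of the ray directions: if
`v` and `vʰ` are built from unit ray directions `dⱼ` and `dⱼʰ` with `‖dⱼ − dⱼʰ‖ ≤ ε`,
local slownesses `0 < ηⱼ ≤ η_max`, nodal phases `βⱼ`, and coefficients `|aⱼ| ≤ M₀`, over a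
nonnegative partition of unity subordinate to balls of radius `h`, then
`|v(x) − vʰ(x)| ≤ ωhη_max ε M₀` on `Ω`. -/
theorem stmt_7 {d : ℕ} (hd : 1 ≤ d) {ι : Type*} (J : Finset ι)
    (Ω : Set (EuclideanSpace ℝ (Fin d))) (h : ℝ) (hh : 0 < h)
    (xj : ι → EuclideanSpace ℝ (Fin d))
    (φj : ι → EuclideanSpace ℝ (Fin d) → ℝ)
    (hφj : ∀ j ∈ J, ∀ x, 0 ≤ φj j x ∧ φj j x ≤ 1)
    (hsum : ∀ x ∈ Ω, ∑ j ∈ J, φj j x = 1)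
    (hsupp : ∀ j ∈ J, ∀ x, h < ‖x - xj j‖ → φj j x = 0)
    (a : ι → ℝ) (M₀ : ℝ) (hM₀ : 0 ≤ M₀) (ha : ∀ j ∈ J, |a j| ≤ M₀)
    (β η : ι → ℝ) (ηmax : ℝ) (hηmax0 : 0 ≤ ηmax)
    (hη : ∀ j ∈ J, 0 < η j ∧ η j ≤ ηmax)
    (dj djh : ι → EuclideanSpace ℝ (Fin d))
    (hdj : ∀ j ∈ J, ‖dj j‖ = 1) (hdjh : ∀ j ∈ J, ‖djh j‖ = 1)
    (ε : ℝ) (hε0 : 0 ≤ ε) (hε : ∀ j ∈ J, ‖dj j - djh j‖ ≤ ε) :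
    ∀ ω : ℝ, 0 < ω → ∀ x ∈ Ω,
      ‖((∑ j ∈ J, (a j : ℂ) * (φj j x : ℂ) *
            Complex.exp (Complex.I * ((β j + ω * η j * ⟪dj j, x - xj j⟫_ℝ : ℝ) : ℂ)))
         - ∑ j ∈ J, (a j : ℂ) * (φj j x : ℂ) *
            Complex.exp (Complex.I * ((β j + ω * η j * ⟪djh j, x - xj j⟫_ℝ : ℝ) : ℂ)))‖
      ≤ ω * h * ηmax * ε * M₀ :=
  stmt_7_general J Ω h xj φj hφj hsum hsupp a M₀ ha β η ηmax hη dj djh ε hε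
end

section
/- Let d ≥ 1 and let Ω ⊆ E = EuclideanSpace ℝ (Fin d) be measurable with finite Lebesgue measure |Ω|. Let {φ_j}_{j∈J} be a nonnegative partition of unity on Ω subordinate to balls of radius h centered at nodes x_j (0 ≤ φ_j ≤ 1, Σ_j φ_j = 1 on Ω, φ_j(x) = 0 for ‖x − x_j‖ > h). Let A : E → ℝ with |A(x_j)| ≤ M₀, and φ : E → ℝ twice continuously differentiable with ‖∇²φ‖ ≤ M₂ everywhere, ∇φ(x_j) ≠ 0 and ‖∇φ(x_j)‖ ≤ η_max for all j. Define u(x) := A(x)e^{iωφ(x)}, d_j := ∇φ(x_j)/‖∇φ(x_j)‖, and, for estimated unit directions d_j^h with ‖d_j − d_j^h‖ ≤ C_d ω^{-1/2}, the numerical ray interpolant u_I^h(x) := Σ_j A(x_j)φ_j(x)·exp(iω(φ(x_j) + ‖∇φ(x_j)‖⟨d_j^h, x − x_j⟩)). Assume ‖A − Σ_j A(x_j)φ_j‖_{L²(Ω)} ≤ C_A h², ω ≥ 1 and h ≤ 1/ω. Then ‖u − u_I^h‖_{L²(Ω)} ≤ (C_A + M₂ M₀ |Ω|^{1/2}/2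 + C_d η_max M₀ |Ω|^{1/2})·ω^{-1/2}. -/
open Complex MeasureTheory
open scoped InnerProductSpace BigOperators ENNReal

/-!
On the support of `φⱼ` the numerical phase `φ(xⱼ) + ‖∇φ(xⱼ)‖⟨dⱼʰ, x − xⱼ⟩` differs from `φ(x)` by
the Taylor remainder, at most `M₂h²/2`, plus `‖∇φ(xⱼ)‖ ‖dⱼ − dⱼʰ‖ h ≤ η_max C_d ω^{-1/2} h`.
Since `t ↦ e^{iωt}` is `ω`-Lipschitz, `ωh ≤ 1` and `ωh² ≤ ω^{-1}`, each local plane wave is within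
`(M₂/2 + C_d η_max) ω^{-1/2}` of `e^{iωφ}`. Writing
`u − u_Iʰ = (A − Σⱼ A(xⱼ)φⱼ) e^{iωφ} + Σⱼ A(xⱼ)φⱼ (e^{iωφ} − e^{iω(⋯)})` and using `Σⱼ φⱼ = 1`,
the pointwise error is at most `|A − Σⱼ A(xⱼ)φⱼ| + M₀(M₂/2 + C_d η_max) ω^{-1/2}`; Minkowski's
inequality in `L²(Ω)` and `h² ≤ ω^{-1/2}` finish the proof.
-/

theorem Complex.norm_exp_I_mul_sub_exp_I_mul_le (ω a b : ℝ) :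
    ‖exp (I * ω * a) - exp (I * ω * b)‖ ≤ |ω| * |a - b| := by
  have hfactor : exp (I * ω * a) - exp (I * ω * b)
      = exp (I * ↑(ω * b)) * (exp (I * ↑(ω * (a - b))) - 1) := by
    rw [mul_sub, mul_one, ← Complex.exp_add]; push_cast; ring_nf
  rw [hfactor, norm_mul, Complex.norm_exp_I_mul_ofReal, one_mul, ← abs_mul, ← Real.norm_eq_abs]
  exact Real.norm_exp_I_mul_ofReal_sub_one_le

theorem mul_sq_le_rpow_neg_half {ω r : ℝ} (hω : 1 ≤ ω) (hr : 0 ≤ r) (hrω : r ≤ 1 / ω) :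
    ω * r ^ 2 ≤ ω ^ (-(1 / 2 : ℝ)) := by
  have hω0 : 0 < ω := zero_lt_one.trans_le hω
  calc ω * r ^ 2 ≤ ω * (1 / ω) ^ 2 := by gcongr
    _ = ω ^ (-1 : ℝ) := by rw [Real.rpow_neg_one]; field_simp
    _ ≤ ω ^ (-(1 / 2 : ℝ)) := Real.rpow_le_rpow_of_exponent_le hω (by norm_num)

section Taylor

variable {E F : Type*} [NormedAddCommGroup E] [NormedSpace ℝ E] [NormedAddCommGroup F]
  [NormedSpace ℝ F]

theorem norm_fderiv_sub_fderiv_le {f : E → F} (hf : ContDiff ℝ 2 f) {M : ℝ}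
    (hM : ∀ y, ‖fderiv ℝ (fderiv ℝ f) y‖ ≤ M) (x y : E) :
    ‖fderiv ℝ f y - fderiv ℝ f x‖ ≤ M * ‖y - x‖ :=
  Convex.norm_image_sub_le_of_norm_fderiv_le
    (fun _ _ => ((hf.fderiv_right le_rfl).differentiable one_ne_zero).differentiableAt)
    (fun z _ => hM z) convex_univ trivial trivial

theorem norm_image_sub_sub_fderiv_apply_le {f : E → F} (hf : Differentiable ℝ f) {L : ℝ}
    {a : E} (hL : ∀ y, ‖fderiv ℝ f y - fderiv ℝ f a‖ ≤ L * ‖y - a‖) (x : E) :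
    ‖f x - f a - fderiv ℝ f a (x - a)‖ ≤ L / 2 * ‖x - a‖ ^ 2 := by
  set v := x - a
  have hline : ∀ t : ℝ, HasDerivAt (fun s : ℝ => a + s • v) v t := fun t => by
    simpa using ((hasDerivAt_id t).smul_const v).const_add a
  have hg : ∀ t : ℝ, HasDerivAt (fun s : ℝ => f (a + s • v) - f a - s • fderiv ℝ f a v)
      (fderiv ℝ f (a + t • v) v - fderiv ℝ f a v) t := fun t =>
    ((((hf _).hasFDerivAt.comp_hasDerivAt t (hline t)).sub_const (f a)).fun_sub
      ((hasDerivAt_id t).smul_const (fderiv ℝ f a v))).congr_deriv (by rw [one_smul])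
  have hB : ∀ t : ℝ, HasDerivAt (fun s : ℝ => L / 2 * ‖v‖ ^ 2 * s ^ 2) (L * ‖v‖ ^ 2 * t) t :=
    fun t => ((hasDerivAt_pow 2 t).const_mul (L / 2 * ‖v‖ ^ 2)).congr_deriv (by push_cast; ring)
  have key := image_norm_le_of_norm_deriv_right_le_deriv_boundary
    (fun t _ => (hg t).continuousAt.continuousWithinAt) (fun t _ => (hg t).hasDerivWithinAt)
    (by simp) hB (fun t ht => ?_) (Set.right_mem_Icc.mpr zero_le_one)
  · simpa [v] using key
  calc ‖fderiv ℝ f (a + t • v) v - fderiv ℝ f a v‖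
      = ‖(fderiv ℝ f (a + t • v) - fderiv ℝ f a) v‖ := rfl
    _ ≤ ‖fderiv ℝ f (a + t • v) - fderiv ℝ f a‖ * ‖v‖ := ContinuousLinearMap.le_opNorm _ _
    _ ≤ L * ‖t • v‖ * ‖v‖ := by
        gcongr
        simpa using hL (a + t • v)
    _ = L * ‖v‖ ^ 2 * t := by
        rw [norm_smul, Real.norm_of_nonneg ht.1]; ring

end Taylor

section Phase

variable {E : Type*} [NormedAddCommGroup E] [InnerProductSpace ℝ E]

theorem abs_inner_sub_norm_mul_inner_le (G d v : E) :
    |⟪G, v⟫_ℝ - ‖G‖ * ⟪d, v⟫_ℝ| ≤ ‖G‖ * ‖‖G‖⁻¹ • G - d‖ * ‖v‖ := by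
  have hG : G - ‖G‖ • d = ‖G‖ • (‖G‖⁻¹ • G - d) := by
    rcases eq_or_ne G 0 with rfl | hG
    · simp
    · rw [smul_sub, smul_inv_smul₀ (norm_ne_zero_iff.mpr hG)]
  calc |⟪G, v⟫_ℝ - ‖G‖ * ⟪d, v⟫_ℝ| = |⟪G - ‖G‖ • d, v⟫_ℝ| := by
        rw [inner_sub_left, real_inner_smul_left]
    _ ≤ ‖G - ‖G‖ • d‖ * ‖v‖ := abs_real_inner_le_norm _ _
    _ = ‖G‖ * ‖‖G‖⁻¹ • G - d‖ * ‖v‖ := by rw [hG, norm_smul, norm_norm]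

variable [CompleteSpace E] {φ : E → ℝ} {a : E}

theorem abs_sub_add_norm_gradient_mul_inner_le (hφ : Differentiable ℝ φ) {L : ℝ}
    (hL : ∀ y, ‖fderiv ℝ φ y - fderiv ℝ φ a‖ ≤ L * ‖y - a‖) (d x : E) :
    |φ x - (φ a + ‖gradient φ a‖ * ⟪d, x - a⟫_ℝ)|
      ≤ L / 2 * ‖x - a‖ ^ 2 + ‖gradient φ a‖ * ‖‖gradient φ a‖⁻¹ • gradient φ a - d‖ * ‖x - a‖ := by
  have hsplit : φ x - (φ a + ‖gradient φ a‖ * ⟪d, x - a⟫_ℝ)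
      = (φ x - φ a - fderiv ℝ φ a (x - a))
        + (⟪gradient φ a, x - a⟫_ℝ - ‖gradient φ a‖ * ⟪d, x - a⟫_ℝ) := by
    rw [inner_gradient_left]; ring
  rw [hsplit]
  exact (abs_add_le _ _).trans (add_le_add (norm_image_sub_sub_fderiv_apply_le hφ hL x)
    (abs_inner_sub_norm_mul_inner_le _ _ _))

theorem norm_exp_sub_exp_linearPhase_le (hφ : Differentiable ℝ φ) {M₂ : ℝ} (hM₂ : 0 ≤ M₂)
    (hL : ∀ y, ‖fderiv ℝ φ y - fderiv ℝ φ a‖ ≤ M₂ * ‖y - a‖)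
    {ω η Cd : ℝ} (hω : 1 ≤ ω) {d x : E} (hx : ‖x - a‖ ≤ 1 / ω) (hη : ‖gradient φ a‖ ≤ η)
    (hd : ‖‖gradient φ a‖⁻¹ • gradient φ a - d‖ ≤ Cd * ω ^ (-(1 / 2 : ℝ))) :
    ‖exp (I * ω * φ x) - exp (I * ω * ((φ a + ‖gradient φ a‖ * ⟪d, x - a⟫_ℝ : ℝ) : ℂ))‖
      ≤ (M₂ / 2 + Cd * η) * ω ^ (-(1 / 2 : ℝ)) := by
  have hω0 : 0 < ω := zero_lt_one.trans_le hω
  have hωr : ω * ‖x - a‖ ≤ 1 := by rwa [le_div_iff₀ hω0, mul_comm] at hx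
  have hωr2 := mul_sq_le_rpow_neg_half hω (norm_nonneg _) hx
  have hη0 : 0 ≤ η := (norm_nonneg _).trans hη
  have hηCd : 0 ≤ η * (Cd * ω ^ (-(1 / 2 : ℝ))) := mul_nonneg hη0 ((norm_nonneg _).trans hd)
  calc _ ≤ |ω| * |φ x - (φ a + ‖gradient φ a‖ * ⟪d, x - a⟫_ℝ)| :=
        norm_exp_I_mul_sub_exp_I_mul_le _ _ _
    _ ≤ ω * (M₂ / 2 * ‖x - a‖ ^ 2
          + ‖gradient φ a‖ * ‖‖gradient φ a‖⁻¹ • gradient φ a - d‖ * ‖x - a‖) := by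
        rw [abs_of_pos hω0]
        exact mul_le_mul_of_nonneg_left (abs_sub_add_norm_gradient_mul_inner_le hφ hL d x) hω0.le
    _ = M₂ / 2 * (ω * ‖x - a‖ ^ 2)
          + ‖gradient φ a‖ * ‖‖gradient φ a‖⁻¹ • gradient φ a - d‖ * (ω * ‖x - a‖) := by ring
    _ ≤ M₂ / 2 * ω ^ (-(1 / 2 : ℝ)) + η * (Cd * ω ^ (-(1 / 2 : ℝ))) * 1 := by gcongr
    _ = (M₂ / 2 + Cd * η) * ω ^ (-(1 / 2 : ℝ)) := by ring

end Phase

theorem norm_mul_sub_sum_mul_le {ι : Type*} (J : Finset ι) {a M K : ℝ} {b w : ι → ℝ} {e : ℂ}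
    {ej : ι → ℂ} (he : ‖e‖ = 1) (hw : ∀ j ∈ J, 0 ≤ w j) (hw1 : ∑ j ∈ J, w j = 1)
    (hb : ∀ j ∈ J, |b j| ≤ M) (hej : ∀ j ∈ J, w j ≠ 0 → ‖e - ej j‖ ≤ K) :
    ‖(a : ℂ) * e - ∑ j ∈ J, (b j : ℂ) * (w j : ℂ) * ej j‖ ≤ ‖a - ∑ j ∈ J, b j * w j‖ + M * K := by
  have hsplit : (a : ℂ) * e - ∑ j ∈ J, (b j : ℂ) * (w j : ℂ) * ej j
      = ((a - ∑ j ∈ J, b j * w j : ℝ) : ℂ) * e + ∑ j ∈ J, (b j : ℂ) * (w j : ℂ) * (e - ej j) := by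
    push_cast
    rw [sub_mul, Finset.sum_mul]
    simp only [mul_sub, Finset.sum_sub_distrib]
    ring
  have hterm : ∀ j ∈ J, ‖(b j : ℂ) * (w j : ℂ) * (e - ej j)‖ ≤ w j * (M * K) := by
    intro j hj
    rcases eq_or_ne (w j) 0 with hw0 | hw0
    · simp [hw0]
    rw [norm_mul, norm_mul, Complex.norm_real, Complex.norm_real, Real.norm_eq_abs,
      Real.norm_of_nonneg (hw j hj), mul_right_comm, mul_comm (w j)]
    exact mul_le_mul_of_nonneg_right (mul_le_mul (hb j hj) (hej j hj hw0) (norm_nonneg _)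
      ((abs_nonneg _).trans (hb j hj))) (hw j hj)
  rw [hsplit]
  calc _ ≤ ‖((a - ∑ j ∈ J, b j * w j : ℝ) : ℂ) * e‖
        + ‖∑ j ∈ J, (b j : ℂ) * (w j : ℂ) * (e - ej j)‖ := norm_add_le _ _
    _ ≤ ‖a - ∑ j ∈ J, b j * w j‖ + ∑ j ∈ J, w j * (M * K) := by
        refine add_le_add ?_ ((norm_sum_le _ _).trans (Finset.sum_le_sum hterm))
        rw [norm_mul, he, mul_one, Complex.norm_real]
    _ = ‖a - ∑ j ∈ J, b j * w j‖ + M * K := by rw [← Finset.sum_mul, hw1, one_mul]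

section Minkowski

variable {α : Type*} [MeasurableSpace α] {μ : Measure α}

theorem ENNReal.lintegral_rpow_add_const_le {q : ℝ} (hq : 1 ≤ q) (u : α → ℝ≥0∞) (c : ℝ≥0∞) :
    (∫⁻ x, (u x + c) ^ q ∂μ) ^ (1 / q)
      ≤ (∫⁻ x, u x ^ q ∂μ) ^ (1 / q) + c * μ Set.univ ^ (1 / q) := by
  have hq0 : 0 < q := zero_lt_one.trans_le hq
  -- `u` need not be measurable: work with a measurable minorant of `(u + c) ^ q` of equal integral.
  obtain ⟨w, hw, hwle, hweq⟩ := exists_measurable_le_lintegral_eq μ (fun x => (u x + c) ^ q)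
  set v := fun x => w x ^ (1 / q) - c
  have hv : ∀ x, v x ≤ u x := fun x => by
    refine tsub_le_iff_right.mpr ?_
    rw [one_div, ENNReal.rpow_inv_le_iff hq0]
    exact hwle x
  have hwv : ∀ x, w x ≤ (v x + c) ^ q := fun x => by
    rw [← ENNReal.rpow_inv_le_iff hq0, ← one_div]
    exact le_tsub_add
  calc (∫⁻ x, (u x + c) ^ q ∂μ) ^ (1 / q)
      ≤ (∫⁻ x, (v x + c) ^ q ∂μ) ^ (1 / q) := by
        rw [hweq]; gcongr with x; exact hwv x
    _ ≤ (∫⁻ x, v x ^ q ∂μ) ^ (1 / q) + (∫⁻ _, c ^ q ∂μ) ^ (1 / q) :=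
        ENNReal.lintegral_Lp_add_le (f := v) (g := fun _ => c) (by fun_prop) aemeasurable_const hq
    _ ≤ (∫⁻ x, u x ^ q ∂μ) ^ (1 / q) + c * μ Set.univ ^ (1 / q) := by
        rw [lintegral_const, ENNReal.mul_rpow_of_nonneg _ _ (by positivity), one_div,
          ENNReal.rpow_rpow_inv hq0.ne']
        gcongr with x
        exact hv x

theorem eLpNorm_le_eLpNorm_add_const {ε ε' : Type*} [ENorm ε] [ENorm ε'] {f : α → ε}
    {g : α → ε'} {p : ℝ≥0∞} (hp : 1 ≤ p) (hp_top : p ≠ ∞) {c : ℝ≥0∞}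
    (hfg : ∀ᵐ x ∂μ, ‖f x‖ₑ ≤ ‖g x‖ₑ + c) :
    eLpNorm f p μ ≤ eLpNorm g p μ + c * μ Set.univ ^ (1 / p.toReal) := by
  have hp0 : p ≠ 0 := (zero_lt_one.trans_le hp).ne'
  rw [eLpNorm_eq_lintegral_rpow_enorm_toReal hp0 hp_top,
    eLpNorm_eq_lintegral_rpow_enorm_toReal hp0 hp_top]
  refine le_trans ?_ (ENNReal.lintegral_rpow_add_const_le
    (ENNReal.toReal_mono hp_top hp |>.trans_eq' ENNReal.toReal_one.symm) _ c)
  gcongr ?_ ^ _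
  exact lintegral_mono_ae (hfg.mono fun x hx => by gcongr)

theorem eLpNorm_two_restrict_le_of_norm_le_add {E F : Type*} [SeminormedAddCommGroup E]
    [SeminormedAddCommGroup F] {f : α → E} {g : α → F} {s : Set α} (hs : MeasurableSet s)
    (hμs : μ s < ∞) {C K : ℝ} (hC : 0 ≤ C) (hK : 0 ≤ K)
    (hg : eLpNorm g 2 (μ.restrict s) ≤ ENNReal.ofReal C) (hfg : ∀ x ∈ s, ‖f x‖ ≤ ‖g x‖ + K) :
    eLpNorm f 2 (μ.restrict s) ≤ ENNReal.ofReal (C + K * √(μ s).toReal) := by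
  have hsqrt : μ s ^ (1 / (2 : ℝ≥0∞).toReal) = ENNReal.ofReal √(μ s).toReal := by
    rw [← ENNReal.ofReal_toReal hμs.ne, ENNReal.ofReal_rpow_of_nonneg ENNReal.toReal_nonneg
      (by norm_num), Real.sqrt_eq_rpow, ENNReal.toReal_ofNat, ENNReal.toReal_ofReal
      ENNReal.toReal_nonneg]
  calc eLpNorm f 2 (μ.restrict s)
      ≤ eLpNorm g 2 (μ.restrict s)
        + ENNReal.ofReal K * μ.restrict s Set.univ ^ (1 / (2 : ℝ≥0∞).toReal) := by
        refine eLpNorm_le_eLpNorm_add_const one_le_two ENNReal.ofNat_ne_top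
          ((ae_restrict_iff' hs).mpr (ae_of_all _ fun x hx => ?_))
        rw [← ofReal_norm, ← ofReal_norm, ← ENNReal.ofReal_add (norm_nonneg _) hK]
        exact ENNReal.ofReal_le_ofReal (hfg x hx)
    _ ≤ ENNReal.ofReal C + ENNReal.ofReal K * ENNReal.ofReal √(μ s).toReal := by
        rw [Measure.restrict_apply_univ, hsqrt]
        gcongr
    _ = ENNReal.ofReal (C + K * √(μ s).toReal) := by
        rw [← ENNReal.ofReal_mul hK, ← ENNReal.ofReal_add hC (by positivity)]

end Minkowski

theorem stmt_8_general {d : ℕ} {ι : Type*} (J : Finset ι)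
    (Ω : Set (EuclideanSpace ℝ (Fin d)))
    (hΩmeas : MeasurableSet Ω) (hΩfin : volume Ω < ⊤)
    (h : ℝ) (hh : 0 < h)
    (xj : ι → EuclideanSpace ℝ (Fin d))
    (φj : ι → EuclideanSpace ℝ (Fin d) → ℝ)
    (hφj : ∀ j ∈ J, ∀ x, 0 ≤ φj j x ∧ φj j x ≤ 1)
    (hsum : ∀ x ∈ Ω, ∑ j ∈ J, φj j x = 1)
    (hsupp : ∀ j ∈ J, ∀ x, h < ‖x - xj j‖ → φj j x = 0)
    (A : EuclideanSpace ℝ (Fin d) → ℝ)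
    (M₀ : ℝ) (hM₀ : ∀ j ∈ J, |A (xj j)| ≤ M₀)
    (φ : EuclideanSpace ℝ (Fin d) → ℝ) (hφ : ContDiff ℝ 2 φ)
    (M₂ : ℝ) (hM₂ : ∀ y, ‖fderiv ℝ (fun z => fderiv ℝ φ z) y‖ ≤ M₂)
    (ηmax : ℝ) (hηmax : ∀ j ∈ J, ‖gradient φ (xj j)‖ ≤ ηmax)
    (ω : ℝ) (hω : 1 ≤ ω) (hhω : h ≤ 1 / ω)
    (djh : ι → EuclideanSpace ℝ (Fin d))
    (Cd : ℝ)
    (hCd : ∀ j ∈ J,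
      ‖(‖gradient φ (xj j)‖)⁻¹ • gradient φ (xj j) - djh j‖ ≤ Cd * ω ^ (-(1/2 : ℝ)))
    (CA : ℝ) (hCA0 : 0 ≤ CA)
    (hCA : eLpNorm (fun x => A x - ∑ j ∈ J, A (xj j) * φj j x) 2 (volume.restrict Ω)
        ≤ ENNReal.ofReal (CA * h ^ 2)) :
    eLpNorm (fun x => (A x : ℂ) * Complex.exp (Complex.I * (ω : ℂ) * (φ x : ℂ))
        - ∑ j ∈ J, (A (xj j) : ℂ) * (φj j x : ℂ)
            * Complex.exp (Complex.I * (ω : ℂ)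
                * ((φ (xj j) + ‖gradient φ (xj j)‖ * ⟪djh j, x - xj j⟫_ℝ : ℝ) : ℂ)))
      2 (volume.restrict Ω)
    ≤ ENNReal.ofReal
        ((CA + M₂ * M₀ * Real.sqrt (volume Ω).toReal / 2
            + Cd * ηmax * M₀ * Real.sqrt (volume Ω).toReal) * ω ^ (-(1/2 : ℝ))) := by
  rcases Ω.eq_empty_or_nonempty with rfl | ⟨x₀, hx₀⟩
  · simp
  obtain ⟨j₀, hj₀, -⟩ := Finset.exists_ne_zero_of_sum_ne_zero ((hsum x₀ hx₀).trans_ne one_ne_zero)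
  set ωe := ω ^ (-(1 / 2 : ℝ))
  have hM₂0 : 0 ≤ M₂ := (norm_nonneg (fderiv ℝ (fderiv ℝ φ) 0)).trans (hM₂ 0)
  have hK : 0 ≤ M₀ * ((M₂ / 2 + Cd * ηmax) * ωe) := by
    have hCd0 : 0 ≤ Cd * ωe := (norm_nonneg _).trans (hCd j₀ hj₀)
    have hη0 : 0 ≤ ηmax := (norm_nonneg _).trans (hηmax j₀ hj₀)
    have hωe : 0 ≤ ωe := Real.rpow_nonneg (zero_le_one.trans hω) _
    rw [show (M₂ / 2 + Cd * ηmax) * ωe = M₂ / 2 * ωe + ηmax * (Cd * ωe) by ring]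
    exact mul_nonneg ((abs_nonneg _).trans (hM₀ j₀ hj₀))
      (add_nonneg (mul_nonneg (div_nonneg hM₂0 zero_le_two) hωe) (mul_nonneg hη0 hCd0))
  have hh2 : h ^ 2 ≤ ωe :=
    (le_mul_of_one_le_left (sq_nonneg h) hω).trans (mul_sq_le_rpow_neg_half hω hh.le hhω)
  calc _ ≤ ENNReal.ofReal (CA * h ^ 2 + M₀ * ((M₂ / 2 + Cd * ηmax) * ωe) * √(volume Ω).toReal) :=
        eLpNorm_two_restrict_le_of_norm_le_add hΩmeas hΩfin (by positivity) hK hCA fun x hx =>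
          norm_mul_sub_sum_mul_le J (by rw [mul_assoc, ← ofReal_mul, norm_exp_I_mul_ofReal])
            (fun j hj => (hφj j hj x).1) (hsum x hx) hM₀ fun j hj hne =>
              norm_exp_sub_exp_linearPhase_le (hφ.differentiable two_ne_zero) hM₂0
                (norm_fderiv_sub_fderiv_le hφ hM₂ _) hω
                ((not_lt.mp (mt (hsupp j hj x) hne)).trans hhω) (hηmax j hj) (hCd j hj)
    _ ≤ _ := ENNReal.ofReal_le_ofReal (by nlinarith [mul_le_mul_of_nonneg_left hh2 hCA0])

/-- `O(ω^{-1/2})` approximation property of the numerical ray-FEM space built from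
NMLA-estimated ray directions: with unit estimated directions `dⱼʰ` satisfying
`‖∇φ(xⱼ)/‖∇φ(xⱼ)‖ − dⱼʰ‖ ≤ C_d ω^{-1/2}`, slownesses `‖∇φ(xⱼ)‖ ≤ η_max`, second-order
amplitude interpolation `‖A − Σⱼ A(xⱼ)φⱼ‖_{L²(Ω)} ≤ C_A h²`, `ω ≥ 1` and `h ≤ 1/ω`,
the interpolant `u_Iʰ(x) = Σⱼ A(xⱼ)φⱼ(x)e^{iω(φ(xⱼ) + ‖∇φ(xⱼ)‖⟨dⱼʰ, x − xⱼ⟩)}` satisfies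
`‖u − u_Iʰ‖_{L²(Ω)} ≤ (C_A + M₂M₀|Ω|^{1/2}/2 + C_d η_max M₀ |Ω|^{1/2}) ω^{-1/2}`. -/
theorem stmt_8 {d : ℕ} (hd : 1 ≤ d) {ι : Type*} (J : Finset ι)
    (Ω : Set (EuclideanSpace ℝ (Fin d)))
    (hΩmeas : MeasurableSet Ω) (hΩfin : volume Ω < ⊤)
    (h : ℝ) (hh : 0 < h)
    (xj : ι → EuclideanSpace ℝ (Fin d))
    (φj : ι → EuclideanSpace ℝ (Fin d) → ℝ)
    (hφj : ∀ j ∈ J, ∀ x, 0 ≤ φj j x ∧ φj j x ≤ 1)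
    (hsum : ∀ x ∈ Ω, ∑ j ∈ J, φj j x = 1)
    (hsupp : ∀ j ∈ J, ∀ x, h < ‖x - xj j‖ → φj j x = 0)
    (A : EuclideanSpace ℝ (Fin d) → ℝ)
    (M₀ : ℝ) (hM₀ : ∀ j ∈ J, |A (xj j)| ≤ M₀)
    (φ : EuclideanSpace ℝ (Fin d) → ℝ) (hφ : ContDiff ℝ 2 φ)
    (M₂ : ℝ) (hM₂ : ∀ y, ‖fderiv ℝ (fun z => fderiv ℝ φ z) y‖ ≤ M₂)
    (hgrad : ∀ j ∈ J, gradient φ (xj j) ≠ 0)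
    (ηmax : ℝ) (hηmax : ∀ j ∈ J, ‖gradient φ (xj j)‖ ≤ ηmax)
    (ω : ℝ) (hω : 1 ≤ ω) (hhω : h ≤ 1 / ω)
    (djh : ι → EuclideanSpace ℝ (Fin d)) (hdjh : ∀ j ∈ J, ‖djh j‖ = 1)
    (Cd : ℝ)
    (hCd : ∀ j ∈ J,
      ‖(‖gradient φ (xj j)‖)⁻¹ • gradient φ (xj j) - djh j‖ ≤ Cd * ω ^ (-(1/2 : ℝ)))
    (CA : ℝ) (hCA0 : 0 ≤ CA)
    (hCA : eLpNorm (fun x => A x - ∑ j ∈ J, A (xj j) * φj j x) 2 (volume.restrict Ω)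
        ≤ ENNReal.ofReal (CA * h ^ 2)) :
    eLpNorm (fun x => (A x : ℂ) * Complex.exp (Complex.I * (ω : ℂ) * (φ x : ℂ))
        - ∑ j ∈ J, (A (xj j) : ℂ) * (φj j x : ℂ)
            * Complex.exp (Complex.I * (ω : ℂ)
                * ((φ (xj j) + ‖gradient φ (xj j)‖ * ⟪djh j, x - xj j⟫_ℝ : ℝ) : ℂ)))
      2 (volume.restrict Ω)
    ≤ ENNReal.ofReal
        ((CA + M₂ * M₀ * Real.sqrt (volume Ω).toReal / 2
            + Cd * ηmax * M₀ * Real.sqrt (volume Ω).toReal) * ω ^ (-(1/2 : ℝ))) :=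
  stmt_8_general J Ω hΩmeas hΩfin h hh xj φj hφj hsum hsupp A M₀ hM₀ φ hφ M₂ hM₂ ηmax hηmax ω hω hhω
    djh Cd hCd CA hCA0 hCA
end

section
/- In the setting of the previous result (A C¹ and φ C² on closedBall(x₀, C_ε) with ∇φ(x₀) ≠ 0; constants C₁ = sup‖∇A‖, C₂ = sup|A|, C₃ = sup‖∇²φ‖, η₀ = ‖∇φ(x₀)‖; δU the impedance perturbation of u = A e^{iωφ} relative to its local plane-wave approximation at x₀, sampled at radius r = C_ε ω^{-1/2}), assume additionally that A(x₀) ≠ 0 and that C_ε² C₂ C₃ < |A(x₀)|/4. Then there exists ω₀ ≥ 1 such that for every ω ≥ ω₀, every unit vector ŝ, and x = x₀ + C_ε ω^{-1/2} ŝ, one has |δU(x)| < |A(x₀)|/4. -/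
/-!
Write `u = A e^{iωφ}` and `u₀ = A(x₀) e^{iωL}` with `L` the linearisation of `φ` at `x₀`, and
`η = ‖∇φ(x₀)‖`. For a wave `a e^{iωψ}` one has `(1/(iωη)) D_s(a e^{iωψ}) + a e^{iωψ} =
(D_s a/(iωη) + a (1 + D_sψ/η)) e^{iωψ}`, so with `B = A (1 + D_sφ/η)` the perturbation splits as
`δU(x) = D_sA(x)/(iωη) e^{iωφ(x)} + (B(x) - B(x₀)) e^{iωφ(x)} + B(x₀) (e^{iωφ(x)} - e^{iωL(x)})`.
The first term is `O(1/ω)`, the second `O(r)` by the mean value inequality, and since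
`|B(x₀)| ≤ 2|A(x₀)|` and `|φ - L| ≤ C₃ r²/2`, the third is at most `C₂ C₃ ω r²`. At
`r = C_ε ω^{-1/2}` this is exactly `C_ε² C₂ C₃`, while the first two terms tend to `0`.
-/

open Complex Metric Filter Topology Set
open scoped InnerProductSpace

theorem norm_cexp_I_mul_sub_cexp_I_mul_le (a b : ℝ) :
    ‖cexp (I * a) - cexp (I * b)‖ ≤ |a - b| := by
  have h : cexp (I * a) - cexp (I * b) = cexp (I * b) * (cexp (I * ↑(a - b)) - 1) := by
    rw [mul_sub, ← Complex.exp_add]; push_cast; ring_nf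
  rw [h, norm_mul, norm_exp_I_mul_ofReal, one_mul, ← Real.norm_eq_abs]
  exact Real.norm_exp_I_mul_ofReal_sub_one_le

-- The constant `1/2` is needed: the smallness hypothesis leaves no room for a cruder bound.
theorem Convex.norm_sub_sub_fderiv_le_half_mul_sq {E F : Type*} [NormedAddCommGroup E]
    [NormedSpace ℝ E] [NormedAddCommGroup F] [NormedSpace ℝ F] {f : E → F}
    {f' : E → E →L[ℝ] F} {s : Set E} {x₀ x : E} {C : ℝ} (hs : Convex ℝ s) (hx₀ : x₀ ∈ s)
    (hx : x ∈ s) (hf : ∀ y ∈ s, HasFDerivWithinAt f (f' y) s y)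
    (hf' : ∀ y ∈ s, ‖f' y - f' x₀‖ ≤ C * ‖y - x₀‖) :
    ‖f x - f x₀ - f' x₀ (x - x₀)‖ ≤ C / 2 * ‖x - x₀‖ ^ 2 := by
  set v := x - x₀
  have hseg : ∀ t ∈ Icc (0 : ℝ) 1, x₀ + t • v ∈ s := fun t ht => hs.add_smul_sub_mem hx₀ hx ht
  let g : ℝ → F := fun t => f (x₀ + t • v) - f x₀ - t • f' x₀ v
  have hg : ∀ t ∈ Icc (0 : ℝ) 1,
      HasDerivWithinAt g (f' (x₀ + t • v) v - f' x₀ v) (Icc 0 1) t := by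
    intro t ht
    have hline : HasDerivWithinAt (fun u : ℝ => x₀ + u • v) v (Icc 0 1) t := by
      simpa using (((hasDerivAt_id t).smul_const v).const_add x₀).hasDerivWithinAt
    have hlin : HasDerivWithinAt (fun u : ℝ => u • f' x₀ v) (f' x₀ v) (Icc 0 1) t := by
      simpa using ((hasDerivAt_id t).smul_const (f' x₀ v)).hasDerivWithinAt
    exact (((hf _ (hseg t ht)).comp_hasDerivWithinAt t hline hseg).sub_const (f x₀)).sub hlin
  have hg' : ∀ t ∈ Ico (0 : ℝ) 1, ‖f' (x₀ + t • v) v - f' x₀ v‖ ≤ C * ‖v‖ ^ 2 * t := by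
    intro t ht
    have hLip := hf' _ (hseg t (Ico_subset_Icc_self ht))
    rw [add_sub_cancel_left, norm_smul, Real.norm_of_nonneg ht.1] at hLip
    calc ‖f' (x₀ + t • v) v - f' x₀ v‖ = ‖(f' (x₀ + t • v) - f' x₀) v‖ := rfl
      _ ≤ C * (t * ‖v‖) * ‖v‖ := (f' (x₀ + t • v) - f' x₀).le_of_opNorm_le hLip v
      _ = C * ‖v‖ ^ 2 * t := by ring
  have hB : ∀ t, HasDerivAt (fun u : ℝ => C * ‖v‖ ^ 2 / 2 * u ^ 2) (C * ‖v‖ ^ 2 * t) t := by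
    intro t
    refine ((hasDerivAt_pow 2 t).const_mul (C * ‖v‖ ^ 2 / 2)).congr_deriv ?_
    push_cast
    ring
  have key := image_norm_le_of_norm_deriv_right_le_deriv_boundary (f := g)
    (fun t ht => (hg t ht).continuousWithinAt)
    (fun t ht => (hg t (Ico_subset_Icc_self ht)).mono_of_mem_nhdsWithin
      (Icc_mem_nhdsGE_of_mem ht))
    (by simp [g]) hB hg' (right_mem_Icc.2 zero_le_one)
  calc ‖f x - f x₀ - f' x₀ (x - x₀)‖ = ‖g 1‖ := by simp [g, v]
    _ ≤ C * ‖v‖ ^ 2 / 2 * 1 ^ 2 := key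
    _ = C / 2 * ‖x - x₀‖ ^ 2 := by ring

section Wave

variable {E : Type*} [NormedAddCommGroup E] [NormedSpace ℝ E]

noncomputable def wave (ω : ℝ) (A φ : E → ℝ) (y : E) : ℂ := (A y : ℂ) * cexp (I * ω * φ y)

noncomputable def impedance (U : Set E) (ω η : ℝ) (f : E → ℂ) (x s : E) : ℂ :=
  1 / (I * ω * η) * fderivWithin ℝ f U x s + f x

theorem HasFDerivWithinAt.wave {A φ : E → ℝ} {A' φ' : E →L[ℝ] ℝ} {U : Set E} {x : E}
    (hA : HasFDerivWithinAt A A' U x) (hφ : HasFDerivWithinAt φ φ' U x) (ω : ℝ) :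
    HasFDerivWithinAt (wave ω A φ)
      (cexp (I * ω * φ x) • (ofRealCLM.comp A' + (I * ω * (A x : ℂ)) • ofRealCLM.comp φ')) U x := by
  have hA' := ofRealCLM.hasFDerivAt.comp_hasFDerivWithinAt x hA
  have hφ' := ofRealCLM.hasFDerivAt.comp_hasFDerivWithinAt x hφ
  refine (hA'.mul (hφ'.const_mul (I * ω)).cexp).congr_fderiv ?_
  ext v
  simp only [Function.comp_apply, ofRealCLM_apply, add_apply, smul_apply,
    ContinuousLinearMap.comp_apply, smul_eq_mul, smul_add]
  ring

end Wave

noncomputable def impedanceBound (C₁ C₂ C₃ η ω r : ℝ) : ℝ :=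
  C₁ / (ω * η) + C₁ * r * (2 + C₃ * r / η) + C₂ * C₃ * r / η + C₂ * C₃ * (ω * r ^ 2)

theorem wave_impedance_sub_eq {ω η α a a₀ p p₀ : ℝ} {E₁ E₂ : ℂ} (hω : ω ≠ 0) (hη : η ≠ 0) :
    1 / (I * ω * η) * (E₁ * (α + I * ω * a * p) - E₂ * (I * ω * a₀ * p₀)) + (a * E₁ - a₀ * E₂)
      = α / (I * ω * η) * E₁ + ((a * (1 + p / η) - a₀ * (1 + p₀ / η) : ℝ) : ℂ) * E₁
        + ((a₀ * (1 + p₀ / η) : ℝ) : ℂ) * (E₁ - E₂) := by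
  have hω' : (ω : ℂ) ≠ 0 := ofReal_ne_zero.2 hω
  have hη' : (η : ℂ) ≠ 0 := ofReal_ne_zero.2 hη
  push_cast
  field_simp
  ring

theorem norm_wave_impedance_sub_le {ω η α a a₀ p p₀ C₁ C₂ C₃ r : ℝ} {E₁ E₂ : ℂ} (hω : 0 < ω)
    (hη : 0 < η) (hE₁ : ‖E₁‖ = 1) (hα : |α| ≤ C₁) (ha : |a - a₀| ≤ C₁ * r)
    (hp : |p - p₀| ≤ C₃ * r) (hp₀ : |p₀| ≤ η) (ha₀ : |a₀| ≤ C₂)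
    (hE : ‖E₁ - E₂‖ ≤ ω * (C₃ / 2 * r ^ 2)) :
    ‖1 / (I * ω * η) * (E₁ * (α + I * ω * a * p) - E₂ * (I * ω * a₀ * p₀)) + (a * E₁ - a₀ * E₂)‖
      ≤ impedanceBound C₁ C₂ C₃ η ω r := by
  have hC₁r : 0 ≤ C₁ * r := (abs_nonneg _).trans ha
  have hC₂ : 0 ≤ C₂ := (abs_nonneg _).trans ha₀
  have hp₀' : |1 + p₀ / η| ≤ 2 := by
    have : |p₀ / η| ≤ 1 := by rwa [abs_div, abs_of_pos hη, div_le_one hη]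
    linarith [abs_add_le 1 (p₀ / η), abs_one (α := ℝ)]
  have hp' : |1 + p / η| ≤ 2 + C₃ * r / η := by
    have : |p| ≤ η + C₃ * r := by linarith [abs_sub_abs_le_abs_sub p p₀]
    have : |p / η| ≤ 1 + C₃ * r / η := by
      rw [abs_div, abs_of_pos hη, div_le_iff₀ hη, add_mul, div_mul_cancel₀ _ hη.ne']
      linarith
    linarith [abs_add_le 1 (p / η), abs_one (α := ℝ)]
  have h₁ : ‖α / (I * ω * η) * E₁‖ ≤ C₁ / (ω * η) := by
    rw [norm_mul, hE₁, mul_one, norm_div, norm_mul, norm_mul, norm_I, one_mul, norm_real,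
      norm_real, norm_real, Real.norm_eq_abs, Real.norm_of_nonneg hω.le,
      Real.norm_of_nonneg hη.le]
    gcongr
  have h₂ : ‖((a * (1 + p / η) - a₀ * (1 + p₀ / η) : ℝ) : ℂ) * E₁‖
      ≤ C₁ * r * (2 + C₃ * r / η) + C₂ * C₃ * r / η := by
    rw [norm_mul, hE₁, mul_one, norm_real, Real.norm_eq_abs]
    calc |a * (1 + p / η) - a₀ * (1 + p₀ / η)| = |(a - a₀) * (1 + p / η) + a₀ * (p - p₀) / η| := by
          congr 1; field_simp; ring
      _ ≤ |a - a₀| * |1 + p / η| + |a₀| * |p - p₀| / η := by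
          refine (abs_add_le _ _).trans_eq ?_
          rw [abs_mul, abs_div, abs_mul, abs_of_pos hη]
      _ ≤ C₁ * r * (2 + C₃ * r / η) + C₂ * (C₃ * r) / η := by
          gcongr
      _ = C₁ * r * (2 + C₃ * r / η) + C₂ * C₃ * r / η := by ring
  have h₃ : ‖((a₀ * (1 + p₀ / η) : ℝ) : ℂ) * (E₁ - E₂)‖ ≤ C₂ * C₃ * (ω * r ^ 2) := by
    rw [norm_mul, norm_real, Real.norm_eq_abs, abs_mul]
    calc |a₀| * |1 + p₀ / η| * ‖E₁ - E₂‖ ≤ C₂ * 2 * (ω * (C₃ / 2 * r ^ 2)) := by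
          gcongr
      _ = C₂ * C₃ * (ω * r ^ 2) := by ring
  rw [wave_impedance_sub_eq hω.ne' hη.ne']
  exact (norm_add₃_le).trans (by unfold impedanceBound; linarith)

section PlaneWave

variable {E : Type*} [NormedAddCommGroup E] [InnerProductSpace ℝ E] [CompleteSpace E]
  {U : Set E} {A φ : E → ℝ} {x₀ x : E} {C₃ : ℝ}

theorem norm_cexp_phase_sub_cexp_linearPhase_le (hU : Convex ℝ U) (hx₀ : U ∈ 𝓝 x₀)
    (hφ : DifferentiableOn ℝ φ U) (hdφ : DifferentiableOn ℝ (fderivWithin ℝ φ U) U)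
    (hC₃ : ∀ y ∈ U, ‖fderivWithin ℝ (fderivWithin ℝ φ U) U y‖ ≤ C₃) {ω : ℝ} (hω : 0 ≤ ω)
    (hx : x ∈ U) :
    ‖cexp (I * ω * φ x) - cexp (I * ω * ((φ x₀ + ⟪gradient φ x₀, x - x₀⟫_ℝ : ℝ) : ℂ))‖
      ≤ ω * (C₃ / 2 * ‖x - x₀‖ ^ 2) := by
  have hx₀U := mem_of_mem_nhds hx₀
  have htaylor := hU.norm_sub_sub_fderiv_le_half_mul_sq hx₀U hx
    (fun y hy => (hφ y hy).hasFDerivWithinAt)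
    fun y hy => hU.norm_image_sub_le_of_norm_fderivWithin_le hdφ hC₃ hx₀U hy
  rw [fderivWithin_of_mem_nhds hx₀, ← inner_gradient_left] at htaylor
  simp only [mul_assoc I, ← ofReal_mul]
  refine (norm_cexp_I_mul_sub_cexp_I_mul_le _ _).trans ?_
  rw [← mul_sub, abs_mul, abs_of_nonneg hω, ← sub_sub]
  exact mul_le_mul_of_nonneg_left htaylor hω

theorem norm_impedance_wave_sub_planeWave_le (hU : Convex ℝ U) (hx₀ : U ∈ 𝓝 x₀)
    (hA : DifferentiableOn ℝ A U) (hφ : DifferentiableOn ℝ φ U)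
    (hdφ : DifferentiableOn ℝ (fderivWithin ℝ φ U) U) (hgrad : gradient φ x₀ ≠ 0) {C₁ C₂ : ℝ}
    (hC₁ : ∀ y ∈ U, ‖fderivWithin ℝ A U y‖ ≤ C₁) (hC₂ : |A x₀| ≤ C₂)
    (hC₃ : ∀ y ∈ U, ‖fderivWithin ℝ (fderivWithin ℝ φ U) U y‖ ≤ C₃) {ω : ℝ} (hω : 0 < ω)
    (hx : x ∈ U) {s : E} (hs : ‖s‖ = 1) :
    ‖impedance U ω ‖gradient φ x₀‖
        (wave ω A φ - wave ω (fun _ => A x₀) fun y => φ x₀ + ⟪gradient φ x₀, y - x₀⟫_ℝ) x s‖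
      ≤ impedanceBound C₁ C₂ C₃ ‖gradient φ x₀‖ ω ‖x - x₀‖ := by
  have hx₀U := mem_of_mem_nhds hx₀
  have hUd : UniqueDiffOn ℝ U := uniqueDiffOn_convex hU ⟨x₀, mem_interior_iff_mem_nhds.2 hx₀⟩
  have hgrad_apply : ∀ v, fderivWithin ℝ φ U x₀ v = ⟪gradient φ x₀, v⟫_ℝ := fun v => by
    rw [fderivWithin_of_mem_nhds hx₀, inner_gradient_left]
  have hplane : HasFDerivWithinAt (fun y => φ x₀ + ⟪gradient φ x₀, y - x₀⟫_ℝ)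
      (innerSL ℝ (gradient φ x₀)) U x := by
    simpa using (((innerSL ℝ (gradient φ x₀)).hasFDerivAt.comp x
      ((hasFDerivAt_id x).sub_const x₀)).const_add (φ x₀)).hasFDerivWithinAt
  have hderiv := ((hA x hx).hasFDerivWithinAt.wave (hφ x hx).hasFDerivWithinAt ω).sub
    ((hasFDerivWithinAt_const (A x₀) x U).wave hplane ω)
  rw [impedance, hderiv.fderivWithin (hUd x hx)]
  simp only [sub_apply, smul_apply, add_apply, ContinuousLinearMap.coe_comp,
    Function.comp_apply, ofRealCLM_apply, smul_eq_mul, innerSL_apply_apply, zero_apply,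
    ofReal_zero, zero_add, Pi.sub_apply, wave]
  have hLip : ‖fderivWithin ℝ φ U x - fderivWithin ℝ φ U x₀‖ ≤ C₃ * ‖x - x₀‖ :=
    hU.norm_image_sub_le_of_norm_fderivWithin_le hdφ hC₃ hx₀U hx
  refine norm_wave_impedance_sub_le hω (norm_pos_iff.2 hgrad) (by simp [norm_exp]) ?_
    (hU.norm_image_sub_le_of_norm_fderivWithin_le hA hC₁ hx₀U hx) ?_ ?_ hC₂
    (norm_cexp_phase_sub_cexp_linearPhase_le hU hx₀ hφ hdφ hC₃ hω.le hx)
  · simpa [hs] using (fderivWithin ℝ A U x).le_of_opNorm_le (hC₁ x hx) s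
  · simpa [hs, hgrad_apply] using
      (fderivWithin ℝ φ U x - fderivWithin ℝ φ U x₀).le_of_opNorm_le hLip s
  · simpa [hs] using abs_real_inner_le_norm (gradient φ x₀) s

end PlaneWave

theorem tendsto_impedanceBound (C₁ C₂ C₃ η Cε : ℝ) :
    Tendsto (fun ω => impedanceBound C₁ C₂ C₃ η ω (Cε * ω ^ (-(1 / 2 : ℝ)))) atTop
      (𝓝 (Cε ^ 2 * C₂ * C₃)) := by
  have hr : Tendsto (fun ω : ℝ => Cε * ω ^ (-(1 / 2 : ℝ))) atTop (𝓝 0) := by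
    simpa using (tendsto_rpow_neg_atTop (by norm_num : (0 : ℝ) < 1 / 2)).const_mul Cε
  have hlim := (((tendsto_inv_atTop_zero.const_mul (C₁ / η)).add
    ((hr.const_mul C₁).mul (((hr.const_mul C₃).div_const η).const_add 2))).add
    ((hr.const_mul (C₂ * C₃)).div_const η)).add (tendsto_const_nhds (x := C₂ * C₃ * Cε ^ 2))
  simp only [mul_zero, zero_mul, zero_div, add_zero, zero_add] at hlim
  rw [show Cε ^ 2 * C₂ * C₃ = C₂ * C₃ * Cε ^ 2 by ring]
  refine hlim.congr' ((eventually_gt_atTop 0).mono fun ω hω => ?_)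
  have hsq : (ω ^ (-(1 / 2 : ℝ))) ^ 2 = ω⁻¹ := by
    rw [Real.rpow_neg hω.le, ← Real.sqrt_eq_rpow, inv_pow, Real.sq_sqrt hω.le]
  simp only [impedanceBound, mul_pow, hsq]
  field_simp

theorem stmt_16_general {d : ℕ}
    (x₀ : EuclideanSpace ℝ (Fin d)) (Cε : ℝ) (hCε : 0 < Cε)
    (A φ : EuclideanSpace ℝ (Fin d) → ℝ)
    (hA : ContDiffOn ℝ 1 A (closedBall x₀ Cε))
    (hφ : ContDiffOn ℝ 2 φ (closedBall x₀ Cε))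
    (hgrad : gradient φ x₀ ≠ 0)
    (C₁ C₂ C₃ : ℝ)
    (hC₁ : ∀ y ∈ closedBall x₀ Cε, ‖fderivWithin ℝ A (closedBall x₀ Cε) y‖ ≤ C₁)
    (hC₂ : ∀ y ∈ closedBall x₀ Cε, |A y| ≤ C₂)
    (hC₃ : ∀ y ∈ closedBall x₀ Cε,
      ‖fderivWithin ℝ (fun z => fderivWithin ℝ φ (closedBall x₀ Cε) z)
          (closedBall x₀ Cε) y‖ ≤ C₃)
    (hsmall : Cε ^ 2 * C₂ * C₃ < |A x₀| / 4) :
    ∃ ω₀ : ℝ, 1 ≤ ω₀ ∧ ∀ ω : ℝ, ω₀ ≤ ω →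
      ∀ δu : EuclideanSpace ℝ (Fin d) → ℂ,
      (∀ y, δu y = (A y : ℂ) * Complex.exp (Complex.I * (ω : ℂ) * (φ y : ℂ))
          - (A x₀ : ℂ) * Complex.exp (Complex.I * (ω : ℂ)
              * ((φ x₀ + ⟪gradient φ x₀, y - x₀⟫_ℝ : ℝ) : ℂ))) →
      ∀ s : EuclideanSpace ℝ (Fin d), ‖s‖ = 1 →
        ‖          ((1 / (Complex.I * (ω : ℂ) * ((‖gradient φ x₀‖ : ℝ) : ℂ)))
              * fderivWithin ℝ δu (closedBall x₀ Cε)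
                  (x₀ + (Cε * ω ^ (-(1/2 : ℝ))) • s) s
            + δu (x₀ + (Cε * ω ^ (-(1/2 : ℝ))) • s))‖
        < |A x₀| / 4 := by
  have hU₀ : closedBall x₀ Cε ∈ 𝓝 x₀ := closedBall_mem_nhds x₀ hCε
  have hUd : UniqueDiffOn ℝ (closedBall x₀ Cε) :=
    uniqueDiffOn_convex (convex_closedBall x₀ Cε) ⟨x₀, mem_interior_iff_mem_nhds.2 hU₀⟩
  have hdφ := (hφ.fderivWithin hUd (by norm_num : (1 : WithTop ℕ∞) + 1 ≤ 2)).differentiableOn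
    one_ne_zero
  obtain ⟨ω₀, hω₀⟩ := eventually_atTop.1 ((eventually_ge_atTop 1).and
    ((tendsto_impedanceBound C₁ C₂ C₃ ‖gradient φ x₀‖ Cε).eventually (gt_mem_nhds hsmall)))
  refine ⟨max ω₀ 1, le_max_right _ _, fun ω hω δu hδu s hs => ?_⟩
  obtain ⟨hω₁, hbound⟩ := hω₀ ω (le_of_max_le_left hω)
  have hr : ‖x₀ + (Cε * ω ^ (-(1 / 2 : ℝ))) • s - x₀‖ = Cε * ω ^ (-(1 / 2 : ℝ)) := by
    rw [add_sub_cancel_left, norm_smul, hs, mul_one, Real.norm_of_nonneg (by positivity)]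
  have hx : x₀ + (Cε * ω ^ (-(1 / 2 : ℝ))) • s ∈ closedBall x₀ Cε := by
    rw [mem_closedBall, dist_eq_norm, hr]
    exact mul_le_of_le_one_right hCε.le (Real.rpow_le_one_of_one_le_of_nonpos hω₁ (by norm_num))
  obtain rfl : δu = wave ω A φ - wave ω (fun _ => A x₀) fun y => φ x₀ + ⟪gradient φ x₀, y - x₀⟫_ℝ :=
    funext hδu
  refine lt_of_le_of_lt ?_ hbound
  have h := norm_impedance_wave_sub_planeWave_le (convex_closedBall x₀ Cε) hU₀
    (hA.differentiableOn one_ne_zero) (hφ.differentiableOn two_ne_zero) hdφ hgrad hC₁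
    (hC₂ x₀ (mem_closedBall_self hCε.le)) hC₃ (zero_lt_one.trans_le hω₁) hx hs
  rwa [hr] at h

/-- Smallness of the NMLA impedance perturbation at high frequency: in the setting of the
`r = C_ε ω^{-1/2}` sampling scaling, if additionally `A(x₀) ≠ 0` and
`C_ε²C₂C₃ < |A(x₀)|/4`, then there is `ω₀ ≥ 1` such that for all `ω ≥ ω₀`, all unit `ŝ`
and `x = x₀ + C_ε ω^{-1/2} ŝ`, the impedance perturbation of `u = A e^{iωφ}` relative to
its local plane-wave approximation at `x₀` satisfies `|δU(x)| < |A(x₀)|/4` — the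
stability condition for NMLA direction recovery. -/
theorem stmt_16 {d : ℕ} (hd : 1 ≤ d)
    (x₀ : EuclideanSpace ℝ (Fin d)) (Cε : ℝ) (hCε : 0 < Cε)
    (A φ : EuclideanSpace ℝ (Fin d) → ℝ)
    (hA : ContDiffOn ℝ 1 A (closedBall x₀ Cε))
    (hφ : ContDiffOn ℝ 2 φ (closedBall x₀ Cε))
    (hgrad : gradient φ x₀ ≠ 0)
    (C₁ C₂ C₃ : ℝ)
    (hC₁ : ∀ y ∈ closedBall x₀ Cε, ‖fderivWithin ℝ A (closedBall x₀ Cε) y‖ ≤ C₁)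
    (hC₂ : ∀ y ∈ closedBall x₀ Cε, |A y| ≤ C₂)
    (hC₃ : ∀ y ∈ closedBall x₀ Cε,
      ‖fderivWithin ℝ (fun z => fderivWithin ℝ φ (closedBall x₀ Cε) z)
          (closedBall x₀ Cε) y‖ ≤ C₃)
    (hA₀ : A x₀ ≠ 0)
    (hsmall : Cε ^ 2 * C₂ * C₃ < |A x₀| / 4) :
    ∃ ω₀ : ℝ, 1 ≤ ω₀ ∧ ∀ ω : ℝ, ω₀ ≤ ω →
      ∀ δu : EuclideanSpace ℝ (Fin d) → ℂ,
      (∀ y, δu y = (A y : ℂ) * Complex.exp (Complex.I * (ω : ℂ) * (φ y : ℂ))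
          - (A x₀ : ℂ) * Complex.exp (Complex.I * (ω : ℂ)
              * ((φ x₀ + ⟪gradient φ x₀, y - x₀⟫_ℝ : ℝ) : ℂ))) →
      ∀ s : EuclideanSpace ℝ (Fin d), ‖s‖ = 1 →
        ‖          ((1 / (Complex.I * (ω : ℂ) * ((‖gradient φ x₀‖ : ℝ) : ℂ)))
              * fderivWithin ℝ δu (closedBall x₀ Cε)
                  (x₀ + (Cε * ω ^ (-(1/2 : ℝ))) • s) s
            + δu (x₀ + (Cε * ω ^ (-(1/2 : ℝ))) • s))‖
        < |A x₀| / 4 :=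
  stmt_16_general x₀ Cε hCε A φ hA hφ hgrad C₁ C₂ C₃ hC₁ hC₂ hC₃ hsmall
end
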